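/- Univariate monotone moment–cumulant formula: let A be a field of characteristic zero, let h = Σ_{n≥1} h_n x^n be a one-variable series with zero constant term, and let M_t := 1 + Σ_{n≥1} (t^n/n!)·R^{(n−1)}(h), where R^{(0)}(h) := h and R^{(n)}(h) := R^{(n−1)}(h) ◁ h. Then the coefficient m_n(t) of x^n in M_t equals Σ_{k=1}^{n} Σ_{i_1+⋯+i_k=n, i_j≥1} (i_1+1)(i_1+i_2+1)⋯(i_1+⋯+i_{k−1}+1)·h_{i_1}⋯h_{i_k}·t^k/k!. In particular m_1(t) = h_1 t, m_2(t) = h_2 t + h_1^2 t^2, and m_3(t) = h_3 t + (5/2) h_1 h_2 t^2 + h_1^3 t^3. -/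

import Mathlib

open PowerSeries

variable {A : Type*}

/-- The univariate pre-Lie product, the bilinear extension to series with zero constant
term of the insertion product on monomials `x^a ◁ x^b = Σ_{k=0}^{a} x^k x^b x^{a−k}
= (a+1)·x^{a+b}`. -/
noncomputable def triPS [CommRing A] (f g : PowerSeries A) : PowerSeries A :=
  PowerSeries.mk fun k =>
    ∑ p ∈ Finset.HasAntidiagonal.antidiagonal k, ((p.1 : A) + 1) * coeff p.1 f * coeff p.2 g

/-- Iterated right pre-Lie powers: `RPS h 0 = h = R^{(0)}(h)`, `RPS h n = R^{(n)}(h)`. -/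
noncomputable def RPS [CommRing A] (h : PowerSeries A) : ℕ → PowerSeries A
  | 0 => h
  | n + 1 => triPS (RPS h n) h

/-- The weight `(i_1+1)(i_1+i_2+1)⋯(i_1+⋯+i_{n−1}+1)` of a composition `(i_1,…,i_n)`
(the empty product, for `n = 1`, being `1`). -/
def weight [CommRing A] {k : ℕ} (c : Composition k) : A :=
  ∏ j ∈ Finset.range (c.length - 1), ((c.sizeUpTo (j + 1) : A) + 1)

/-- The product `h_{i_1}⋯h_{i_n}` over the parts of a composition `(i_1,…,i_n)`. -/
noncomputable def prodH [CommRing A] (h : PowerSeries A) {k : ℕ} (c : Composition k) : A :=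
  (c.blocks.map fun i => coeff i h).prod

/-- The series `M_t = 1 + Σ_{n≥1} (t^n/n!)·R^{(n−1)}(h)`; on the coefficient of `x^n` the sum
truncates at `k = n` since `R^{(k−1)}(h)` has vanishing coefficients in degrees below `k`. -/
noncomputable def MtPS [Field A] (h : PowerSeries A) (t : A) : PowerSeries A :=
  PowerSeries.mk fun n =>
    if n = 0 then 1
    else ∑ k ∈ Finset.Icc 1 n, t ^ k / (k.factorial : A) * coeff n (RPS h (k - 1))

/-!
Since `x^a ◁ x^b = (a+1)·x^{a+b}`, the coefficient of `x^n` in `R^{(m+1)}(h) = R^{(m)}(h) ◁ h` is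
`Σ_{a+b=n} (a+1)·[x^a]R^{(m)}(h)·h_b`. Reading `b` as the last part of a composition of `n` whose
first parts sum to `a`, induction on `m` shows that `[x^n]R^{(m)}(h)` is the sum of
`(i_1+1)(i_1+i_2+1)⋯(i_1+⋯+i_m+1)·h_{i_1}⋯h_{i_{m+1}}` over compositions of `n` into `m+1` parts
(the term `b = 0` vanishes because `h_0 = 0`). Weighting by `t^k/k!` gives the formula for `m_n(t)`.
-/

open Finset

namespace Composition

variable {n : ℕ}

def take (d : Composition n) (i : ℕ) : Composition (d.sizeUpTo i) where
  blocks := d.blocks.take i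
  blocks_pos hj := d.blocks_pos (List.mem_of_mem_take hj)
  blocks_sum := rfl

theorem length_take (d : Composition n) {i : ℕ} (hi : i ≤ d.length) : (d.take i).length = i :=
  List.length_take_of_le hi

theorem sizeUpTo_take (d : Composition n) {i j : ℕ} (hji : j ≤ i) :
    (d.take i).sizeUpTo j = d.sizeUpTo j := by
  simp only [sizeUpTo, take, List.take_take, min_eq_left hji]

theorem blocks_eq_take_append {d : Composition n} {i : ℕ} (hd : d.length = i + 1) :
    d.blocks = (d.take i).blocks ++ [n - d.sizeUpTo i] := by
  have hlast : d.sizeUpTo i + d.blocks[i]'(by simp [hd]) = n := by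
    rw [← d.sizeUpTo_succ (by omega), d.sizeUpTo_ofLength_le _ hd.le]
  rw [show n - d.sizeUpTo i = d.blocks[i]'(by simp [hd]) by omega, take,
    List.take_concat_get']
  exact (List.take_of_length_le (by simp [hd])).symm

theorem filter_length_eq_empty {k : ℕ} (hnk : n < k) :
    univ.filter (fun c : Composition n => c.length = k) = ∅ :=
  filter_eq_empty_iff.2 fun c _ hc => by
    have := c.length_le
    omega

theorem sum_length_succ_eq {M : Type*} [AddCommMonoid M] (n i : ℕ)
    (g : (k : ℕ) → Composition k → ℕ → M) :
    ∑ d ∈ univ.filter (fun d : Composition n => d.length = i + 1),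
        g _ (d.take i) (n - d.sizeUpTo i) =
      ∑ k ∈ range n, ∑ c ∈ univ.filter (fun c : Composition k => c.length = i), g k c (n - k) := by
  rw [sum_sigma']
  refine sum_bij' (fun d _ => ⟨d.sizeUpTo i, d.take i⟩)
    (fun x hx => (x.2.append (single (n - x.1) (Nat.sub_pos_of_lt
      (mem_range.1 (mem_sigma.1 hx).1)))).cast (Nat.add_sub_of_le
      (mem_range.1 (mem_sigma.1 hx).1).le)) ?_ ?_ ?_ ?_ (fun _ _ => rfl)
  · intro d hd
    have hlen : d.length = i + 1 := (mem_filter.1 hd).2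
    have hlt : d.sizeUpTo i < n := by
      simpa [d.sizeUpTo_ofLength_le _ hlen.le] using d.sizeUpTo_strict_mono (i := i) (by omega)
    simp [hlt, d.length_take (i := i) (by omega)]
  · rintro ⟨k, c⟩ hx
    have hlen : c.length = i := (mem_filter.1 (mem_sigma.1 hx).2).2
    simp [Composition.length, hlen]
  · intro d hd
    exact Composition.ext (blocks_eq_take_append (mem_filter.1 hd).2).symm
  · rintro ⟨k, c⟩ hx
    have hlen : c.length = i := (mem_filter.1 (mem_sigma.1 hx).2).2
    refine sigma_eq_iff_blocks_eq.2 ?_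
    simp [take, List.take_left' hlen]

end Composition

theorem weight_eq_weight_take_mul [CommRing A] {n i : ℕ} {d : Composition n}
    (hd : d.length = i + 1) :
    (weight d : A) = weight (d.take i) * (d.sizeUpTo i + 1) := by
  unfold weight
  rw [hd, d.length_take (by omega), Nat.add_sub_cancel]
  rcases i with _ | i
  · simp
  · rw [Nat.add_sub_cancel, prod_range_succ]
    congr 1
    exact prod_congr rfl fun j hj => by
      rw [d.sizeUpTo_take (by simp at hj; omega)]

theorem prodH_eq_prodH_take_mul [CommRing A] (h : PowerSeries A) {n i : ℕ} {d : Composition n}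
    (hd : d.length = i + 1) :
    prodH h d = prodH h (d.take i) * coeff (n - d.sizeUpTo i) h := by
  simp [prodH, Composition.blocks_eq_take_append hd]

section PreLie

variable [CommRing A] (h : PowerSeries A)

@[simp]
theorem RPS_zero : RPS h 0 = h := rfl

theorem coeff_RPS_succ (m n : ℕ) :
    coeff n (RPS h (m + 1)) =
      ∑ p ∈ antidiagonal n, ((p.1 : A) + 1) * coeff p.1 (RPS h m) * coeff p.2 h := by
  rw [RPS, triPS, coeff_mk]

theorem coeff_RPS (hh : coeff 0 h = 0) (m n : ℕ) :
    coeff n (RPS h m) =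
      ∑ c ∈ univ.filter (fun c : Composition n => c.length = m + 1), weight c * prodH h c := by
  induction m generalizing n with
  | zero =>
    rcases n.eq_zero_or_pos with rfl | hn
    · rw [RPS_zero, hh, Composition.filter_length_eq_empty (by omega), sum_empty]
    · rw [show univ.filter (fun c : Composition n => c.length = 0 + 1) = {.single n hn} by
        ext c; simp [← Composition.eq_single_iff_length hn]]
      simp [weight, prodH]
  | succ m ih =>
    calc coeff n (RPS h (m + 1))
        = ∑ k ∈ range n, ((k : A) + 1) * coeff k (RPS h m) * coeff (n - k) h := by
          rw [coeff_RPS_succ, Nat.sum_antidiagonal_eq_sum_range_succ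
            (fun a b => ((a : A) + 1) * coeff a (RPS h m) * coeff b h), sum_range_succ,
            Nat.sub_self, hh, mul_zero, add_zero]
      _ = ∑ k ∈ range n, ∑ c ∈ univ.filter (fun c : Composition k => c.length = m + 1),
            weight c * prodH h c * ((k : A) + 1) * coeff (n - k) h := by
          refine sum_congr rfl fun k _ => ?_
          rw [ih, mul_sum, sum_mul]
          exact sum_congr rfl fun c _ => by ring
      _ = ∑ d ∈ univ.filter (fun d : Composition n => d.length = m + 1 + 1),
            weight (d.take (m + 1)) * prodH h (d.take (m + 1)) *
              ((d.sizeUpTo (m + 1) : A) + 1) * coeff (n - d.sizeUpTo (m + 1)) h :=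
          (Composition.sum_length_succ_eq n (m + 1)
            fun k c j => weight c * prodH h c * ((k : A) + 1) * coeff j h).symm
      _ = _ := sum_congr rfl fun d hd => by
          rw [weight_eq_weight_take_mul (mem_filter.1 hd).2,
            prodH_eq_prodH_take_mul h (mem_filter.1 hd).2]
          ring

theorem coeff_RPS_eq_zero_of_le (hh : coeff 0 h = 0) {m n : ℕ} (hnm : n ≤ m) :
    coeff n (RPS h m) = 0 := by
  rw [coeff_RPS h hh, Composition.filter_length_eq_empty (by omega), sum_empty]

theorem coeff_two_RPS_one (hh : coeff 0 h = 0) : coeff 2 (RPS h 1) = 2 * coeff 1 h ^ 2 := by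
  rw [coeff_RPS_succ]
  simp [Nat.sum_antidiagonal_succ, hh]
  ring

theorem coeff_three_RPS_one (hh : coeff 0 h = 0) :
    coeff 3 (RPS h 1) = 5 * coeff 1 h * coeff 2 h := by
  rw [coeff_RPS_succ]
  simp [Nat.sum_antidiagonal_succ, hh]
  ring

theorem coeff_three_RPS_two (hh : coeff 0 h = 0) : coeff 3 (RPS h 2) = 6 * coeff 1 h ^ 3 := by
  rw [coeff_RPS_succ]
  simp [Nat.sum_antidiagonal_succ, hh, coeff_RPS_eq_zero_of_le h hh, coeff_two_RPS_one h hh]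
  ring

end PreLie

section Moments

variable [Field A] (h : PowerSeries A)

theorem coeff_MtPS (t : A) {n : ℕ} (hn : n ≠ 0) :
    coeff n (MtPS h t) =
      ∑ k ∈ Icc 1 n, t ^ k / (k.factorial : A) * coeff n (RPS h (k - 1)) := by
  rw [MtPS, coeff_mk, if_neg hn]

theorem coeff_MtPS_eq_sum_compositions (hh : coeff 0 h = 0) (t : A) {n : ℕ} (hn : 1 ≤ n) :
    coeff n (MtPS h t) =
      ∑ k ∈ Icc 1 n,
        (∑ c ∈ univ.filter (fun c : Composition n => c.length = k), weight c * prodH h c) *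
          t ^ k / (k.factorial : A) := by
  rw [coeff_MtPS h t (by omega)]
  refine sum_congr rfl fun k hk => ?_
  rw [coeff_RPS h hh, Nat.sub_add_cancel (mem_Icc.1 hk).1]
  ring

theorem coeff_one_MtPS (t : A) : coeff 1 (MtPS h t) = coeff 1 h * t := by
  simp [coeff_MtPS, mul_comm]

variable [CharZero A]

theorem coeff_two_MtPS (hh : coeff 0 h = 0) (t : A) :
    coeff 2 (MtPS h t) = coeff 2 h * t + coeff 1 h ^ 2 * t ^ 2 := by
  simp [coeff_MtPS, sum_Icc_succ_top, coeff_two_RPS_one h hh]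
  ring

theorem coeff_three_MtPS (hh : coeff 0 h = 0) (t : A) :
    coeff 3 (MtPS h t) =
      coeff 3 h * t + (5 / 2 : A) * coeff 1 h * coeff 2 h * t ^ 2 + coeff 1 h ^ 3 * t ^ 3 := by
  simp [coeff_MtPS, sum_Icc_succ_top, coeff_three_RPS_one h hh, coeff_three_RPS_two h hh]
  ring

end Moments

/-- univariate monotone moment–cumulant formula.  For `h = Σ_{n≥1} h_n x^n`
with zero constant term, the coefficient `m_n(t)` of `x^n` in `M_t` equals
`Σ_{k=1}^{n} Σ_{i_1+⋯+i_k=n, i_j≥1} (i_1+1)(i_1+i_2+1)⋯(i_1+⋯+i_{k−1}+1)·h_{i_1}⋯h_{i_k}·t^k/k!`.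
In particular `m_1(t) = h_1 t`, `m_2(t) = h_2 t + h_1² t²`, and
`m_3(t) = h_3 t + (5/2) h_1 h_2 t² + h_1³ t³`. -/
theorem stmt17 [Field A] [CharZero A] (h : PowerSeries A) (hh : coeff 0 h = 0) :
    (∀ t : A, ∀ n, 1 ≤ n →
      coeff n (MtPS h t) =
        ∑ k ∈ Finset.Icc 1 n,
          (∑ c ∈ Finset.univ.filter (fun c : Composition n => c.length = k),
            weight c * prodH h c) * t ^ k / (k.factorial : A)) ∧
    (∀ t : A, coeff 1 (MtPS h t) = coeff 1 h * t) ∧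
    (∀ t : A, coeff 2 (MtPS h t) = coeff 2 h * t + (coeff 1 h) ^ 2 * t ^ 2) ∧
    (∀ t : A, coeff 3 (MtPS h t) =
      coeff 3 h * t + (5 / 2 : A) * coeff 1 h * coeff 2 h * t ^ 2
        + (coeff 1 h) ^ 3 * t ^ 3) :=
  ⟨fun t _ hn => coeff_MtPS_eq_sum_compositions h hh t hn, coeff_one_MtPS h,
    coeff_two_MtPS h hh, coeff_three_MtPS h hh⟩
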